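/- Let e₁ = (1,0) and e₂ = (0,1) in ℤ², and let s₁, s₂ > 0; set s(±e₁) = s₁ and s(±e₂) = s₂. For a finitely supported function f : ℤ² → ℝ (whose value at 0 is irrelevant) and λ > 0 define E_λ(f) = λ·∑_{x∈ℤ², x≠0} f(x)² + (1/2)·∑_{x,y∈ℤ²∖{0}, |x−y|=1} s(y−x)·(f(y) − f(x))², and define f_ext : ℤ² → ℝ by f_ext(x) = f(x) for x ≠ 0 and f_ext(0) = (1/4)·(f(e₁) + f(−e₁) + f(e₂) + f(−e₂)), together with Ē_λ(f_ext) = λ·∑_{x∈ℤ²} f_ext(x)² + (1/2)·∑_{x,y∈ℤ², |x−y|=1} (f_ext(y) − f_ext(x))². Then there exists a constant C = C(s₁,s₂) ≥ 1 such that for every λ > 0 and every finitely supported f : ℤ² → ℝ, C⁻¹·E_λ(f) ≤ Ē_λ(f_ext) ≤ C·E_λ(f). -/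
import Mathlib

/-- The four nearest-neighbor increments in `ℤ²`. -/
def nbrs2 : Finset (ℤ × ℤ) := {(1, 0), (-1, 0), (0, 1), (0, -1)}

/-- Nearest-neighbor rates: `s(±e₁) = s₁`, `s(±e₂) = s₂`. -/
def sRate (s₁ s₂ : ℝ) (z : ℤ × ℤ) : ℝ := if z.2 = 0 then s₁ else s₂

/-- The `H₁`-energy `E_λ(f)` on `ℤ² ∖ {0}` with rates `s`. -/
noncomputable def Epunct (s₁ s₂ lam : ℝ) (f : ℤ × ℤ → ℝ) : ℝ :=
  lam * ∑ᶠ x : ℤ × ℤ, (if x ≠ 0 then (f x) ^ 2 else 0) +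
    (1 / 2) * ∑ᶠ x : ℤ × ℤ, ∑ z ∈ nbrs2,
      (if x ≠ 0 ∧ x + z ≠ 0 then sRate s₁ s₂ z * (f (x + z) - f x) ^ 2 else 0)

/-- The extended `H₁`-energy `Ē_λ(g)` on all of `ℤ²` with unit rates. -/
noncomputable def Efull (lam : ℝ) (g : ℤ × ℤ → ℝ) : ℝ :=
  lam * ∑ᶠ x : ℤ × ℤ, (g x) ^ 2 +
    (1 / 2) * ∑ᶠ x : ℤ × ℤ, ∑ z ∈ nbrs2, (g (x + z) - g x) ^ 2

/-- The extension `f_ext` filling in the value at the origin by the average of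
the four neighboring values. -/
noncomputable def fext (f : ℤ × ℤ → ℝ) : ℤ × ℤ → ℝ := fun x =>
  if x = 0 then (f (1, 0) + f (-1, 0) + f (0, 1) + f (0, -1)) / 4 else f x

private lemma path2 (a b x : ℝ) : (a-b)^2 ≤ 2*((a-x)^2+(x-b)^2) := by
  nlinarith [sq_nonneg (a - 2*x + b)]

private lemma path4 (a b x y z : ℝ) : (a-b)^2 ≤ 4*((a-x)^2+(x-y)^2+(y-z)^2+(z-b)^2) := by
  nlinarith [sq_nonneg ((a-x)-(x-y)), sq_nonneg ((a-x)-(y-z)), sq_nonneg ((a-x)-(z-b)),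
    sq_nonneg ((x-y)-(y-z)), sq_nonneg ((x-y)-(z-b)), sq_nonneg ((y-z)-(z-b))]

private lemma Rbound (a b c d p q r t : ℝ) :
    (a - (a+b+c+d)/4)^2 + (b - (a+b+c+d)/4)^2 + (c - (a+b+c+d)/4)^2 + (d - (a+b+c+d)/4)^2
      ≤ 6 * ((p-a)^2 + (t-a)^2 + (q-b)^2 + (r-b)^2 + (p-c)^2 + (q-c)^2 + (r-d)^2 + (t-d)^2) := by
  linarith [path2 a c p, path2 a d t, path2 b c q, path2 b d r,
    path4 a b p c q, path4 c d p a t, sq_nonneg (p-a), sq_nonneg (t-a), sq_nonneg (q-b),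
    sq_nonneg (r-b), sq_nonneg (p-c), sq_nonneg (q-c), sq_nonneg (r-d), sq_nonneg (t-d)]


private lemma avg_sq_le (a b c d PA : ℝ) (h : a^2+b^2+c^2+d^2 ≤ PA) :
    ((a+b+c+d)/4)^2 ≤ PA := by
  nlinarith [sq_nonneg (a-b), sq_nonneg (a-c), sq_nonneg (a-d), sq_nonneg (b-c),
    sq_nonneg (b-d), sq_nonneg (c-d)]

private lemma s8_ext (u1 u2 u3 u4 p q r t e1 e2 e3 e4 : ℝ) :
    (p-u1)^2 + (t-u1)^2 + (q-u2)^2 + (r-u2)^2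
      + (p-u3)^2 + (q-u3)^2 + (r-u4)^2 + (t-u4)^2
    ≤ (e1-u1)^2 + (p-u1)^2 + (t-u1)^2
      + ((e2-u2)^2 + (q-u2)^2 + (r-u2)^2)
      + ((p-u3)^2 + (q-u3)^2 + (e3-u3)^2)
      + ((t-u4)^2 + (r-u4)^2 + (e4-u4)^2) := by
  nlinarith [sq_nonneg (e1-u1), sq_nonneg (e2-u2), sq_nonneg (e3-u3), sq_nonneg (e4-u4)]

private lemma efull_nn (lam PA B1 R m2 : ℝ) (hlam : 0 ≤ lam) (hPA : 0 ≤ PA)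
    (hB1 : 0 ≤ B1) (hR : 0 ≤ R) (hm2 : 0 ≤ m2) :
    0 ≤ lam * (PA + m2) + (1/2) * (B1 + 2*R) := by
  nlinarith [mul_nonneg hlam (add_nonneg hPA hm2)]

private lemma combine_lower (M lam PA Bs B1 R m2 : ℝ) (hM1 : 1 ≤ M) (hlam : 0 ≤ lam)
    (hPA0 : 0 ≤ PA) (hB10 : 0 ≤ B1) (hR0 : 0 ≤ R) (hm20 : 0 ≤ m2)
    (hhi : Bs ≤ M * B1) :
    lam * PA + (1/2) * Bs ≤ M * (lam * (PA + m2) + (1/2) * (B1 + 2*R)) := by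
  nlinarith [mul_nonneg (mul_nonneg (sub_nonneg.mpr hM1) hlam) hPA0,
    mul_nonneg (mul_nonneg (by linarith : (0:ℝ) ≤ M) hlam) hm20,
    mul_nonneg (by linarith : (0:ℝ) ≤ M) hR0]

private lemma lower_final (C M Ep Ef : ℝ) (hC : 0 < C) (hMC : M ≤ C) (hEf : 0 ≤ Ef)
    (h : Ep ≤ M * Ef) : C⁻¹ * Ep ≤ Ef := by
  rw [inv_mul_le_iff₀ hC]
  nlinarith [mul_nonneg (sub_nonneg.mpr hMC) hEf]

private lemma combine_upper (C mu M lam PA Bs B1 R m2 : ℝ) (hCpos : 0 < C)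
    (hC2 : 2 ≤ C) (hCμ : C * mu = 13 + M) (hM1 : 1 ≤ M) (hlam : 0 ≤ lam)
    (hPA0 : 0 ≤ PA) (hB10 : 0 ≤ B1) (hm2 : m2 ≤ PA) (hRB : R ≤ 6*B1)
    (hlo : mu * B1 ≤ Bs) :
    lam * (PA + m2) + (1/2) * (B1 + 2*R) ≤ C * (lam * PA + (1/2) * Bs) := by
  have h1 : lam * m2 ≤ lam * PA := mul_le_mul_of_nonneg_left hm2 hlam
  have h2 : C * (mu * B1) ≤ C * Bs := mul_le_mul_of_nonneg_left hlo hCpos.le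
  have h3 : C * (mu * B1) = (13 + M) * B1 := by rw [← mul_assoc, hCμ]
  have h4 : 0 ≤ (C - 2) * (lam * PA) :=
    mul_nonneg (by linarith) (mul_nonneg hlam hPA0)
  have h5 : 0 ≤ M * B1 := mul_nonneg (by linarith) hB10
  nlinarith [h1, h2, h3, h4, h5, hRB]

set_option maxHeartbeats 1000000 in
theorem stmt_4 (s₁ s₂ : ℝ) (hs₁ : 0 < s₁) (hs₂ : 0 < s₂) :
    ∃ C : ℝ, 1 ≤ C ∧ ∀ lam : ℝ, 0 < lam →
      ∀ f : ℤ × ℤ → ℝ, (Function.support f).Finite →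
        C⁻¹ * Epunct s₁ s₂ lam f ≤ Efull lam (fext f) ∧
          Efull lam (fext f) ≤ C * Epunct s₁ s₂ lam f := by
  classical
  set M : ℝ := max (max s₁ s₂) 1 with hMdef
  set μ : ℝ := min (min s₁ s₂) 1 with hμdef
  have hμ : 0 < μ := lt_min (lt_min hs₁ hs₂) one_pos
  have hμ1 : μ ≤ 1 := min_le_right _ _
  have hM1 : (1:ℝ) ≤ M := le_max_right _ _
  have hμs₁ : μ ≤ s₁ := le_trans (min_le_left _ _) (min_le_left _ _)
  have hμs₂ : μ ≤ s₂ := le_trans (min_le_left _ _) (min_le_right _ _)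
  have hs₁M : s₁ ≤ M := le_trans (le_max_left _ _) (le_max_left _ _)
  have hs₂M : s₂ ≤ M := le_trans (le_max_right _ _) (le_max_left _ _)
  set C : ℝ := (13 + M)/μ with hCdef
  have hCpos : 0 < C := by positivity
  have hMC : M ≤ C := by rw [hCdef, le_div_iff₀ hμ]; nlinarith
  have hC2 : (2:ℝ) ≤ C := by rw [hCdef, le_div_iff₀ hμ]; nlinarith
  have hCμ : C * μ = 13 + M := div_mul_cancel₀ _ (ne_of_gt hμ)
  refine ⟨C, by linarith, ?_⟩
  intro lam hlam f hf
  set S : Finset (ℤ × ℤ) := hf.toFinset ∪ insert (0 : ℤ×ℤ) nbrs2 with hSdef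
  set T : Finset (ℤ × ℤ) := S.biUnion
    (fun x => {x, x+(1,0), x+(-1,0), x+(0,1), x+(0,-1)}) with hTdef
  have hST : ∀ x ∈ S, x ∈ T := fun x hx =>
    Finset.mem_biUnion.mpr ⟨x, hx, Finset.mem_insert_self _ _⟩
  have hfS : ∀ x : ℤ×ℤ, f x ≠ 0 → x ∈ S := fun x hx =>
    Finset.mem_union_left _ (hf.mem_toFinset.mpr hx)
  have hV5S : ∀ x ∈ insert (0 : ℤ×ℤ) nbrs2, x ∈ S := fun x hx =>
    Finset.mem_union_right _ hx
  have hgne : ∀ x : ℤ×ℤ, x ≠ 0 → fext f x = f x := fun x hx => by simp [fext, hx]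
  have hgS : ∀ x : ℤ×ℤ, fext f x ≠ 0 → x ∈ S := by
    intro x hx
    by_cases h0 : x = 0
    · exact hV5S x (by rw [h0]; exact Finset.mem_insert_self _ _)
    · exact hfS x (by rwa [hgne x h0] at hx)
  have hback : ∀ x : ℤ×ℤ, ∀ z ∈ nbrs2, x + z ∈ S → x ∈ T := by
    intro x z hz hxz
    refine Finset.mem_biUnion.mpr ⟨x+z, hxz, ?_⟩
    have hz' : z = (1,0) ∨ z = (-1,0) ∨ z = (0,1) ∨ z = (0,-1) := by
      simpa [nbrs2, Finset.mem_insert, Finset.mem_singleton] using hz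
    simp only [Finset.mem_insert, Finset.mem_singleton, Prod.ext_iff, Prod.fst_add,
      Prod.snd_add]
    rcases hz' with rfl|rfl|rfl|rfl <;> simp <;> omega
  have hmemf : ∀ x : ℤ×ℤ, ∀ z ∈ nbrs2, f (x+z) ≠ f x → x ∈ T := by
    intro x z hz hne
    by_cases h : f x = 0
    · have : f (x+z) ≠ 0 := by rw [h] at hne; exact hne
      exact hback x z hz (hfS _ this)
    · exact hST x (hfS x h)
  have hmemg : ∀ x : ℤ×ℤ, ∀ z ∈ nbrs2, fext f (x+z) ≠ fext f x → x ∈ T := by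
    intro x z hz hne
    by_cases h : fext f x = 0
    · have : fext f (x+z) ≠ 0 := by rw [h] at hne; exact hne
      exact hback x z hz (hgS _ this)
    · exact hST x (hgS x h)
  have e1 : ∑ᶠ x : ℤ×ℤ, (if x ≠ 0 then (f x)^2 else 0)
      = ∑ x ∈ T, (if x ≠ 0 then (f x)^2 else 0) := by
    refine finsum_eq_sum_of_support_subset _ ?_
    intro x hx
    simp only [Function.mem_support] at hx
    by_cases h0 : x = 0
    · simp [h0] at hx
    · have hfx : f x ≠ 0 := fun h => hx (by simp [h0, h])
      exact Finset.mem_coe.mpr (hST x (hfS x hfx))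
  have e2 : ∑ᶠ x : ℤ×ℤ, ∑ z ∈ nbrs2,
        (if x ≠ 0 ∧ x + z ≠ 0 then sRate s₁ s₂ z * (f (x + z) - f x)^2 else 0)
      = ∑ x ∈ T, ∑ z ∈ nbrs2,
        (if x ≠ 0 ∧ x + z ≠ 0 then sRate s₁ s₂ z * (f (x + z) - f x)^2 else 0) := by
    refine finsum_eq_sum_of_support_subset _ ?_
    intro x hx
    simp only [Function.mem_support] at hx
    obtain ⟨z, hz, hzne⟩ := Finset.exists_ne_zero_of_sum_ne_zero hx
    have hne : f (x+z) ≠ f x := by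
      intro h
      apply hzne
      by_cases hc : x ≠ 0 ∧ x + z ≠ 0 <;> simp [hc, h]
    exact Finset.mem_coe.mpr (hmemf x z hz hne)
  have e3 : ∑ᶠ x : ℤ×ℤ, (fext f x)^2 = ∑ x ∈ T, (fext f x)^2 := by
    refine finsum_eq_sum_of_support_subset _ ?_
    intro x hx
    simp only [Function.mem_support] at hx
    have : fext f x ≠ 0 := fun h => hx (by simp [h])
    exact Finset.mem_coe.mpr (hST x (hgS x this))
  have e4 : ∑ᶠ x : ℤ×ℤ, ∑ z ∈ nbrs2, (fext f (x + z) - fext f x)^2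
      = ∑ x ∈ T, ∑ z ∈ nbrs2, (fext f (x + z) - fext f x)^2 := by
    refine finsum_eq_sum_of_support_subset _ ?_
    intro x hx
    simp only [Function.mem_support] at hx
    obtain ⟨z, hz, hzne⟩ := Finset.exists_ne_zero_of_sum_ne_zero hx
    have hne : fext f (x+z) ≠ fext f x := by
      intro h; apply hzne; rw [h, sub_self]; norm_num
    exact Finset.mem_coe.mpr (hmemg x z hz hne)
  set a := f (1,0) with ha
  set b := f (-1,0) with hb
  set c := f (0,1) with hc
  set d := f (0,-1) with hd
  set m : ℝ := (a+b+c+d)/4 with hm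
  have hg0 : fext f 0 = m := by rw [hm, ha, hb, hc, hd]; simp [fext]
  set PA := ∑ x ∈ T, (if x ≠ 0 then (f x)^2 else 0) with hPAdef
  set Bs := ∑ x ∈ T, ∑ z ∈ nbrs2,
    (if x ≠ 0 ∧ x + z ≠ 0 then sRate s₁ s₂ z * (f (x + z) - f x)^2 else 0) with hBsdef
  set B1 := ∑ x ∈ T, ∑ z ∈ nbrs2,
    (if x ≠ 0 ∧ x + z ≠ 0 then (f (x + z) - f x)^2 else 0) with hB1def
  set R : ℝ := (a-m)^2+(b-m)^2+(c-m)^2+(d-m)^2 with hRdef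
  have h0T : (0:ℤ×ℤ) ∈ T := hST 0 (hV5S 0 (Finset.mem_insert_self _ _))
  -- nonnegativity
  have hPA0 : 0 ≤ PA := Finset.sum_nonneg fun x _ => by split <;> positivity
  have hB10 : 0 ≤ B1 := Finset.sum_nonneg fun x _ =>
    Finset.sum_nonneg fun z _ => by split <;> positivity
  have hR0 : 0 ≤ R := by rw [hRdef]; positivity
  -- QA = PA + m²
  have hQA : ∑ x ∈ T, (fext f x)^2 = PA + m^2 := by
    have hs : ∀ x ∈ T, (fext f x)^2
        = (if x ≠ 0 then (f x)^2 else 0) + (if x = 0 then m^2 else 0) := by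
      intro x _
      by_cases h0 : x = 0
      · simp [h0, hg0]
      · simp [h0, hgne x h0]
    rw [Finset.sum_congr rfl hs, Finset.sum_add_distrib, ← hPAdef,
      Finset.sum_ite_eq' T (0:ℤ×ℤ) (fun _ => m^2), if_pos h0T]
  -- BF = B1 + 2R
  have hBF : ∑ x ∈ T, ∑ z ∈ nbrs2, (fext f (x + z) - fext f x)^2 = B1 + 2*R := by
    have hsplit : ∀ x ∈ T, ∑ z ∈ nbrs2, (fext f (x+z) - fext f x)^2
        = (∑ z ∈ nbrs2, (if x ≠ 0 ∧ x + z ≠ 0 then (f (x+z) - f x)^2 else 0))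
          + ∑ z ∈ nbrs2, (if x = 0 ∨ x + z = 0 then (fext f (x+z) - fext f x)^2 else 0) := by
      intro x _
      rw [← Finset.sum_add_distrib]
      refine Finset.sum_congr rfl fun z _ => ?_
      by_cases hcond : x = 0 ∨ x + z = 0
      · have h1 : ¬(x ≠ 0 ∧ x + z ≠ 0) := by tauto
        rw [if_neg h1, if_pos hcond, zero_add]
      · push_neg at hcond
        rw [if_pos hcond, if_neg (by tauto), add_zero, hgne _ hcond.1, hgne _ hcond.2]
    rw [Finset.sum_congr rfl hsplit, Finset.sum_add_distrib, ← hB1def]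
    congr 1
    have hsubTV : insert (0:ℤ×ℤ) nbrs2 ⊆ T := fun x hx => hST x (hV5S x hx)
    have hnegmem : ∀ z ∈ nbrs2, -z ∈ nbrs2 := by decide
    have hout : ∑ x ∈ T, ∑ z ∈ nbrs2,
          (if x = 0 ∨ x + z = 0 then (fext f (x+z) - fext f x)^2 else 0)
        = ∑ x ∈ insert (0:ℤ×ℤ) nbrs2, ∑ z ∈ nbrs2,
          (if x = 0 ∨ x + z = 0 then (fext f (x+z) - fext f x)^2 else 0) := by
      refine (Finset.sum_subset hsubTV ?_).symm
      intro x _ hxV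
      refine Finset.sum_eq_zero fun z hz => ?_
      rw [if_neg]
      rintro (h0 | hz0)
      · exact hxV (by rw [h0]; exact Finset.mem_insert_self _ _)
      · have hxz : x = -z := by
          have := eq_neg_of_add_eq_zero_left hz0
          exact this
        exact hxV (Finset.mem_insert_of_mem (hxz ▸ hnegmem z hz))
    rw [hout, hRdef, hm, ha, hb, hc, hd]
    norm_num [nbrs2, fext, Finset.sum_insert, Finset.mem_insert, Prod.ext_iff]
    ring
  -- rate comparison
  have hrate_lo : μ * B1 ≤ Bs := by
    rw [hB1def, hBsdef, Finset.mul_sum]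
    refine Finset.sum_le_sum fun x _ => ?_
    rw [Finset.mul_sum]
    refine Finset.sum_le_sum fun z _ => ?_
    by_cases hcond : x ≠ 0 ∧ x + z ≠ 0
    · rw [if_pos hcond, if_pos hcond]
      have hsr : μ ≤ sRate s₁ s₂ z := by
        rw [sRate]; split
        · exact hμs₁
        · exact hμs₂
      exact mul_le_mul_of_nonneg_right hsr (sq_nonneg _)
    · simp [hcond]
  have hrate_hi : Bs ≤ M * B1 := by
    rw [hB1def, hBsdef, Finset.mul_sum]
    refine Finset.sum_le_sum fun x _ => ?_
    rw [Finset.mul_sum]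
    refine Finset.sum_le_sum fun z _ => ?_
    by_cases hcond : x ≠ 0 ∧ x + z ≠ 0
    · rw [if_pos hcond, if_pos hcond]
      have hsr : sRate s₁ s₂ z ≤ M := by
        rw [sRate]; split
        · exact hs₁M
        · exact hs₂M
      exact mul_le_mul_of_nonneg_right hsr (sq_nonneg _)
    · simp [hcond]
  have hnsubT : nbrs2 ⊆ T := fun z hz => hST z (hV5S z (Finset.mem_insert_of_mem hz))
  -- m² ≤ PA
  have hm2 : m^2 ≤ PA := by
    have h4 : ∑ x ∈ nbrs2, (if x ≠ 0 then (f x)^2 else 0) ≤ PA := by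
      rw [hPAdef]
      exact Finset.sum_le_sum_of_subset_of_nonneg hnsubT
        (fun x _ _ => by split <;> positivity)
    have hval : ∑ x ∈ nbrs2, (if x ≠ 0 then (f x)^2 else 0) = a^2+b^2+c^2+d^2 := by
      rw [ha, hb, hc, hd]
      norm_num [nbrs2, Prod.ext_iff]
      ring
    rw [hval] at h4
    rw [hm]
    exact avg_sq_le a b c d PA h4
  -- R ≤ 6 B1
  have hRB : R ≤ 6 * B1 := by
    have h4 : ∑ x ∈ nbrs2, ∑ z ∈ nbrs2,
        (if x ≠ 0 ∧ x + z ≠ 0 then (f (x+z) - f x)^2 else 0) ≤ B1 := by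
      rw [hB1def]
      exact Finset.sum_le_sum_of_subset_of_nonneg hnsubT
        (fun x _ _ => Finset.sum_nonneg fun z _ => by split <;> positivity)
    have hval2 : ∑ x ∈ nbrs2, ∑ z ∈ nbrs2,
          (if x ≠ 0 ∧ x + z ≠ 0 then (f (x+z) - f x)^2 else 0)
        = (f (2,0) - a)^2 + (f (1,1) - a)^2 + (f (1,-1) - a)^2
          + ((f (-2,0) - b)^2 + (f (-1,1) - b)^2 + (f (-1,-1) - b)^2)
          + ((f (1,1) - c)^2 + (f (-1,1) - c)^2 + (f (0,2) - c)^2)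
          + ((f (1,-1) - d)^2 + (f (-1,-1) - d)^2 + (f (0,-2) - d)^2) := by
      rw [ha, hb, hc, hd]
      norm_num [nbrs2, Prod.ext_iff]
      ring
    have hS8 : (f (1,1) - a)^2 + (f (1,-1) - a)^2 + (f (-1,1) - b)^2 + (f (-1,-1) - b)^2
        + (f (1,1) - c)^2 + (f (-1,1) - c)^2 + (f (-1,-1) - d)^2 + (f (1,-1) - d)^2
        ≤ ∑ x ∈ nbrs2, ∑ z ∈ nbrs2,
          (if x ≠ 0 ∧ x + z ≠ 0 then (f (x+z) - f x)^2 else 0) := by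
      rw [hval2]
      exact s8_ext a b c d (f (1,1)) (f (-1,1)) (f (-1,-1)) (f (1,-1))
        (f (2,0)) (f (-2,0)) (f (0,2)) (f (0,-2))
    have hrb := Rbound a b c d (f (1,1)) (f (-1,1)) (f (-1,-1)) (f (1,-1))
    rw [hRdef, hm]
    refine le_trans hrb ?_
    have h6 : (f (1,1) - a)^2 + (f (1,-1) - a)^2 + (f (-1,1) - b)^2 + (f (-1,-1) - b)^2
        + (f (1,1) - c)^2 + (f (-1,1) - c)^2 + (f (-1,-1) - d)^2 + (f (1,-1) - d)^2 ≤ B1 :=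
      le_trans hS8 h4
    have := mul_le_mul_of_nonneg_left h6 (by norm_num : (0:ℝ) ≤ 6)
    linear_combination this
  -- energies
  have hEp : Epunct s₁ s₂ lam f = lam * PA + (1/2) * Bs := by
    rw [Epunct, e1, e2]
  have hEf : Efull lam (fext f) = lam * (PA + m^2) + (1/2) * (B1 + 2*R) := by
    rw [Efull, e3, e4, hQA, hBF]
  have hEf0 : 0 ≤ Efull lam (fext f) := by
    rw [hEf]
    exact efull_nn lam PA B1 R (m^2) hlam.le hPA0 hB10 hR0 (sq_nonneg m)
  have hEple : Epunct s₁ s₂ lam f ≤ M * Efull lam (fext f) := by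
    rw [hEp, hEf]
    exact combine_lower M lam PA Bs B1 R (m^2) hM1 hlam.le hPA0 hB10 hR0
      (sq_nonneg m) hrate_hi
  constructor
  · exact lower_final C M _ _ hCpos hMC hEf0 hEple
  · rw [hEp, hEf]
    exact combine_upper C μ M lam PA Bs B1 R (m^2) hCpos hC2 hCμ hM1 hlam.le
      hPA0 hB10 hm2 hRB hrate_lo
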